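/- arXiv:1511.05245 — 2 statements merged into one kernel-verified Lean document; each statement's English description precedes it below -/
import Mathlib

section
/- Let 𝔸 be a commutative Banach algebra over ℝ and let U₁, U₂ : ℝ³ → 𝔸 be smooth functions of the variables (x, y, t). If U₁ and U₂ satisfy ∂_y U₁ = ∂_x² U₁ + 2 ∂_x U₂ and 2 ∂_t U₁ = 2 ∂_x³ U₁ + 3 ∂_x² U₂ + 3 ∂_y U₂ + 6 U₁ ∘ ∂_x U₁, then U := U₁ satisfies the 𝔸-valued KP equation ∂_x( 4 ∂_t U − 12 U ∘ ∂_x U − ∂_x³ U ) − 3 ∂_y² U = 0. -/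
/-- Partial derivative in the `x`-direction of a function of `(x, y, t) : ℝ × ℝ × ℝ`. -/
noncomputable def pdX {A : Type*} [NormedAddCommGroup A] [NormedSpace ℝ A]
    (f : ℝ × ℝ × ℝ → A) : ℝ × ℝ × ℝ → A :=
  fun p => lineDeriv ℝ f p (1, 0, 0)

/-- Partial derivative in the `y`-direction. -/
noncomputable def pdY {A : Type*} [NormedAddCommGroup A] [NormedSpace ℝ A]
    (f : ℝ × ℝ × ℝ → A) : ℝ × ℝ × ℝ → A :=
  fun p => lineDeriv ℝ f p (0, 1, 0)

/-- Partial derivative in the `t`-direction. -/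
noncomputable def pdT {A : Type*} [NormedAddCommGroup A] [NormedSpace ℝ A]
    (f : ℝ × ℝ × ℝ → A) : ℝ × ℝ × ℝ → A :=
  fun p => lineDeriv ℝ f p (0, 0, 1)


section KPaux
variable {A : Type*} [NormedCommRing A] [NormedAlgebra ℝ A]

noncomputable def KPD (v : ℝ × ℝ × ℝ) (f : ℝ × ℝ × ℝ → A) : ℝ × ℝ × ℝ → A :=
  fun p => fderiv ℝ f p v

lemma KPD_contDiff {v : ℝ × ℝ × ℝ} {f : ℝ × ℝ × ℝ → A} (hf : ContDiff ℝ (⊤ : ℕ∞) f) :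
    ContDiff ℝ (⊤ : ℕ∞) (KPD v f) :=
  (hf.fderiv_right (by simp)).clm_apply contDiff_const

lemma KPD_add {v : ℝ × ℝ × ℝ} {f g : ℝ × ℝ × ℝ → A} (hf : ContDiff ℝ (⊤ : ℕ∞) f)
    (hg : ContDiff ℝ (⊤ : ℕ∞) g) :
    KPD v (fun p => f p + g p) = fun p => KPD v f p + KPD v g p := by
  funext p
  simp only [KPD, fderiv_fun_add (hf.differentiable (by simp) p) (hg.differentiable (by simp) p),
    ContinuousLinearMap.add_apply]

lemma KPD_sub {v : ℝ × ℝ × ℝ} {f g : ℝ × ℝ × ℝ → A} (hf : ContDiff ℝ (⊤ : ℕ∞) f)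
    (hg : ContDiff ℝ (⊤ : ℕ∞) g) :
    KPD v (fun p => f p - g p) = fun p => KPD v f p - KPD v g p := by
  funext p
  simp only [KPD, fderiv_fun_sub (hf.differentiable (by simp) p) (hg.differentiable (by simp) p),
    ContinuousLinearMap.sub_apply]

lemma KPD_const_mul {v : ℝ × ℝ × ℝ} {f : ℝ × ℝ × ℝ → A} (hf : ContDiff ℝ (⊤ : ℕ∞) f) (c : A) :
    KPD v (fun p => c * f p) = fun p => c * KPD v f p := by
  funext p
  simp only [KPD, fderiv_const_mul (hf.differentiable (by simp) p) c,
    ContinuousLinearMap.smul_apply, smul_eq_mul]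

lemma KPD_mul {v : ℝ × ℝ × ℝ} {f g : ℝ × ℝ × ℝ → A} (hf : ContDiff ℝ (⊤ : ℕ∞) f)
    (hg : ContDiff ℝ (⊤ : ℕ∞) g) :
    KPD v (fun p => f p * g p) = fun p => f p * KPD v g p + g p * KPD v f p := by
  funext p
  simp only [KPD, fderiv_fun_mul (hf.differentiable (by simp) p) (hg.differentiable (by simp) p),
    ContinuousLinearMap.add_apply, ContinuousLinearMap.smul_apply, smul_eq_mul]

lemma KPD_comm (v w : ℝ × ℝ × ℝ) {f : ℝ × ℝ × ℝ → A} (hf : ContDiff ℝ (⊤ : ℕ∞) f) :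
    KPD v (KPD w f) = KPD w (KPD v f) := by
  funext p
  have hd : ContDiff ℝ (⊤ : ℕ∞) (fderiv ℝ f) := hf.fderiv_right (by simp)
  have key : ∀ a b : ℝ × ℝ × ℝ, KPD a (KPD b f) p = fderiv ℝ (fderiv ℝ f) p a b := by
    intro a b
    have : fderiv ℝ (fun q => fderiv ℝ f q b) p
        = (fderiv ℝ (fderiv ℝ f) p).flip b := by
      rw [fderiv_clm_apply (hd.differentiable (by simp) p) (differentiableAt_const b)]
      simp
    show fderiv ℝ (fun q => fderiv ℝ f q b) p a = _
    rw [this]; rfl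
  rw [key v w, key w v]
  exact (hf.contDiffAt.isSymmSndFDerivAt (by rw [minSmoothness_of_isRCLikeNormedField]; exact WithTop.coe_le_coe.mpr le_top)) v w

lemma pd_eq {f : ℝ × ℝ × ℝ → A} (hf : ContDiff ℝ (⊤ : ℕ∞) f) (v : ℝ × ℝ × ℝ) :
    (fun p => lineDeriv ℝ f p v) = KPD v f := by
  funext p
  exact (hf.differentiable (by simp) p).lineDeriv_eq_fderiv

end KPaux

lemma kp_key {A : Type*} [NormedCommRing A] [NormedAlgebra ℝ A]
    (vx vy vt : ℝ × ℝ × ℝ) (u w : ℝ × ℝ × ℝ → A)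
    (hu : ContDiff ℝ (⊤ : ℕ∞) u) (hw : ContDiff ℝ (⊤ : ℕ∞) w)
    (H1 : ∀ p, KPD vy u p = KPD vx (KPD vx u) p + 2 * KPD vx w p)
    (H2 : ∀ p, 2 * KPD vt u p
        = 2 * KPD vx (KPD vx (KPD vx u)) p + 3 * KPD vx (KPD vx w) p + 3 * KPD vy w p
          + 6 * (u p * KPD vx u p)) :
    ∀ p, KPD vx (fun q => 4 * KPD vt u q - 12 * (u q * KPD vx u q)
            - KPD vx (KPD vx (KPD vx u)) q) p
        - 3 * KPD vy (KPD vy u) p = 0 := by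
  intro p
  have su1 : ContDiff ℝ (⊤ : ℕ∞) (KPD vx u) := KPD_contDiff hu
  have su2 : ContDiff ℝ (⊤ : ℕ∞) (KPD vx (KPD vx u)) := KPD_contDiff su1
  have su3 : ContDiff ℝ (⊤ : ℕ∞) (KPD vx (KPD vx (KPD vx u))) := KPD_contDiff su2
  have sw1 : ContDiff ℝ (⊤ : ℕ∞) (KPD vx w) := KPD_contDiff hw
  have sw2 : ContDiff ℝ (⊤ : ℕ∞) (KPD vx (KPD vx w)) := KPD_contDiff sw1
  have swy : ContDiff ℝ (⊤ : ℕ∞) (KPD vy w) := KPD_contDiff hw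
  have sut : ContDiff ℝ (⊤ : ℕ∞) (KPD vt u) := KPD_contDiff hu
  have H1f : KPD vy u = fun p => KPD vx (KPD vx u) p + 2 * KPD vx w p := funext H1
  have H2f : (fun p => 2 * KPD vt u p)
      = fun p => 2 * KPD vx (KPD vx (KPD vx u)) p + 3 * KPD vx (KPD vx w) p
          + 3 * KPD vy w p + 6 * (u p * KPD vx u p) := funext H2
  -- expand the x-derivative of H2
  have E := congrArg (KPD vx) H2f
  simp only [KPD_const_mul sut (2:A),
    KPD_add (((contDiff_const (c := (2:A))).mul su3).add
        ((contDiff_const (c := (3:A))).mul sw2) |>.add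
        ((contDiff_const (c := (3:A))).mul swy))
      ((contDiff_const (c := (6:A))).mul (hu.mul su1)),
    KPD_add (((contDiff_const (c := (2:A))).mul su3).add
        ((contDiff_const (c := (3:A))).mul sw2))
      ((contDiff_const (c := (3:A))).mul swy),
    KPD_add ((contDiff_const (c := (2:A))).mul su3) ((contDiff_const (c := (3:A))).mul sw2),
    KPD_const_mul su3 (2:A), KPD_const_mul sw2 (3:A), KPD_const_mul swy (3:A),
    KPD_const_mul (hu.mul su1) (6:A), KPD_mul hu su1] at E
  have key := congrFun E p
  -- expand KPD vx (KPD vx (KPD vy u))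
  have G2 := congrArg (KPD vx) (congrArg (KPD vx) H1f)
  simp only [KPD_add su2 ((contDiff_const (c := (2:A))).mul sw1), KPD_const_mul sw1 (2:A),
    KPD_add su3 ((contDiff_const (c := (2:A))).mul sw2), KPD_const_mul sw2 (2:A)] at G2
  -- expand KPD vy (KPD vy u)
  have F := congrArg (KPD vy) H1f
  simp only [KPD_add su2 ((contDiff_const (c := (2:A))).mul sw1), KPD_const_mul sw1 (2:A),
    KPD_comm vy vx hw, KPD_comm vy vx su1, KPD_comm vy vx hu, G2] at F
  -- expand the goal
  simp only [KPD_sub (((contDiff_const (c := (4:A))).mul sut).sub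
      ((contDiff_const (c := (12:A))).mul (hu.mul su1))) su3,
    KPD_sub ((contDiff_const (c := (4:A))).mul sut)
      ((contDiff_const (c := (12:A))).mul (hu.mul su1)),
    KPD_const_mul sut (4:A), KPD_const_mul (hu.mul su1) (12:A), KPD_mul hu su1, F]
  linear_combination (2:A) * key

/-- if smooth `U₁ U₂ : ℝ³ → 𝔸` (𝔸 a commutative Banach ℝ-algebra) satisfy
`∂_y U₁ = ∂_x² U₁ + 2 ∂_x U₂` and
`2 ∂_t U₁ = 2 ∂_x³ U₁ + 3 ∂_x² U₂ + 3 ∂_y U₂ + 6 U₁ ∘ ∂_x U₁`,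
then `U := U₁` satisfies the 𝔸-valued KP equation
`∂_x(4 ∂_t U − 12 U ∘ ∂_x U − ∂_x³ U) − 3 ∂_y² U = 0`. -/
theorem stmt1 {A : Type*} [NormedCommRing A] [NormedAlgebra ℝ A] [CompleteSpace A]
    (U₁ U₂ : ℝ × ℝ × ℝ → A)
    (hU₁ : ContDiff ℝ (⊤ : ℕ∞) U₁) (hU₂ : ContDiff ℝ (⊤ : ℕ∞) U₂)
    (h1 : ∀ p, pdY U₁ p = pdX (pdX U₁) p + 2 * pdX U₂ p)
    (h2 : ∀ p, 2 * pdT U₁ p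
        = 2 * pdX (pdX (pdX U₁)) p + 3 * pdX (pdX U₂) p + 3 * pdY U₂ p
          + 6 * (U₁ p * pdX U₁ p)) :
    ∀ p, pdX (fun q => 4 * pdT U₁ q - 12 * (U₁ q * pdX U₁ q) - pdX (pdX (pdX U₁)) q) p
        - 3 * pdY (pdY U₁) p = 0 := by
  set vx : ℝ × ℝ × ℝ := (1, 0, 0) with hvx
  set vy : ℝ × ℝ × ℝ := (0, 1, 0) with hvy
  set vt : ℝ × ℝ × ℝ := (0, 0, 1) with hvt
  have ex : pdX U₁ = KPD vx U₁ := pd_eq hU₁ vx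
  have exw : pdX U₂ = KPD vx U₂ := pd_eq hU₂ vx
  have ey : pdY U₁ = KPD vy U₁ := pd_eq hU₁ vy
  have eyw : pdY U₂ = KPD vy U₂ := pd_eq hU₂ vy
  have et : pdT U₁ = KPD vt U₁ := pd_eq hU₁ vt
  have ex2 : pdX (KPD vx U₁) = KPD vx (KPD vx U₁) := pd_eq (KPD_contDiff hU₁) vx
  have ex3 : pdX (KPD vx (KPD vx U₁)) = KPD vx (KPD vx (KPD vx U₁)) :=
    pd_eq (KPD_contDiff (KPD_contDiff hU₁)) vx
  have exw2 : pdX (KPD vx U₂) = KPD vx (KPD vx U₂) := pd_eq (KPD_contDiff hU₂) vx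
  have ey2 : pdY (KPD vy U₁) = KPD vy (KPD vy U₁) := pd_eq (KPD_contDiff hU₁) vy
  simp only [ex, exw, ey, eyw, et, ex2, ex3, exw2, ey2] at h1 h2 ⊢
  have hG : ContDiff ℝ (⊤ : ℕ∞) (fun q => 4 * KPD vt U₁ q - 12 * (U₁ q * KPD vx U₁ q)
      - KPD vx (KPD vx (KPD vx U₁)) q) :=
    (((contDiff_const (c := (4:A))).mul (KPD_contDiff hU₁)).sub
      ((contDiff_const (c := (12:A))).mul (hU₁.mul (KPD_contDiff hU₁)))).sub
      (KPD_contDiff (KPD_contDiff (KPD_contDiff hU₁)))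
  have eG : pdX (fun q => 4 * KPD vt U₁ q - 12 * (U₁ q * KPD vx U₁ q)
        - KPD vx (KPD vx (KPD vx U₁)) q)
      = KPD vx (fun q => 4 * KPD vt U₁ q - 12 * (U₁ q * KPD vx U₁ q)
        - KPD vx (KPD vx (KPD vx U₁)) q) := pd_eq hG vx
  rw [eG]
  exact kp_key vx vy vt U₁ U₂ hU₁ hU₂ h1 h2
end

section
/- For n ≥ 1, the restriction of tr_n to the commutative subalgebra Z_n is a symmetric and nondegenerate trace form: for all A, B ∈ Z_n, tr_n(AB) = tr_n(BA), and for every nonzero A ∈ Z_n there exists B ∈ Z_n with tr_n(AB) ≠ 0. -/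
/-- The lower shift matrix `Λ`, with entries `Λ_{i,j} = δ_{i,j+1}`. -/
def shiftΛ (n : ℕ) : Matrix (Fin n) (Fin n) ℝ :=
  Matrix.of fun i j => if (i : ℕ) = (j : ℕ) + 1 then 1 else 0

/-- The commutative subalgebra `Z_n`: the linear span of `I, Λ, …, Λ^{n-1}`. -/
def Zn (n : ℕ) : Submodule ℝ (Matrix (Fin n) (Fin n) ℝ) :=
  Submodule.span ℝ (Set.range fun k : Fin n => shiftΛ n ^ (k : ℕ))

/-- The upper triangular matrix `M` with `M_{i,j} = 1/(n - j + i)` for `i ≤ j`. -/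
noncomputable def trM (n : ℕ) : Matrix (Fin n) (Fin n) ℝ :=
  Matrix.of fun i j =>
    if (i : ℕ) ≤ (j : ℕ) then ((n : ℝ) - (j : ℕ) + (i : ℕ))⁻¹ else 0

/-- The trace-type map `tr_n : gl(n,ℝ) → ℝ`, `tr_n(A) = trace(M A)`. -/
noncomputable def trn (n : ℕ) (A : Matrix (Fin n) (Fin n) ℝ) : ℝ :=
  Matrix.trace (trM n * A)

/-!
`Z_n` consists of the polynomials `∑ c_k Λ^k` in the nilpotent shift `Λ`, so it is commutative
and symmetry of `tr_n` on it is immediate. The `p`-th superdiagonal of `M` is constant equal to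
`1/(n - p)` and has `n - p` entries, so `tr_n(Λ^p) = 1` for `p < n` (and `0` otherwise, as
`Λ^p = 0`). Hence if `k₀` is the least index with `c_{k₀} ≠ 0`, then
`tr_n((∑ c_k Λ^k) Λ^{n-1-k₀}) = ∑_{k ≤ k₀} c_k = c_{k₀} ≠ 0`.
-/

lemma shiftΛ_pow_apply (n p : ℕ) (i j : Fin n) :
    (shiftΛ n ^ p) i j = if (i : ℕ) = j + p then 1 else 0 := by
  induction p generalizing i with
  | zero => simp [Matrix.one_apply, Fin.ext_iff]
  | succ p ih =>
    simp only [pow_succ', Matrix.mul_apply, ih]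
    simp only [shiftΛ, Matrix.of_apply, mul_ite, mul_one, mul_zero]
    by_cases h : (j : ℕ) + p < n
    · rw [Finset.sum_eq_single ⟨j + p, h⟩] <;> grind
    · refine Finset.sum_eq_zero (fun k _ => ?_) |>.trans (if_neg ?_).symm <;> grind

lemma trM_mul_shiftΛ_pow_apply_self (n p : ℕ) (i : Fin n) :
    (trM n * shiftΛ n ^ p) i i = if (i : ℕ) < n - p then ((n - p : ℕ) : ℝ)⁻¹ else 0 := by
  simp only [Matrix.mul_apply, shiftΛ_pow_apply, mul_ite, mul_one, mul_zero]
  by_cases h : (i : ℕ) + p < n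
  · rw [Finset.sum_eq_single ⟨i + p, h⟩ (by grind) (by simp), trM, Matrix.of_apply,
      if_pos (by simp), if_pos (by simp), if_pos (by omega), Nat.cast_sub (by omega)]
    push_cast; ring
  · rw [if_neg (by omega)]
    exact Finset.sum_eq_zero fun k _ => by grind

lemma trn_shiftΛ_pow (n p : ℕ) : trn n (shiftΛ n ^ p) = if p < n then 1 else 0 := by
  rw [trn, Matrix.trace]
  simp only [Matrix.diag_apply, trM_mul_shiftΛ_pow_apply_self]
  rw [← Finset.sum_filter, Finset.sum_const, Fin.card_filter_val_lt, nsmul_eq_mul]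
  split_ifs with h
  · rw [min_eq_right (Nat.sub_le n p)]
    exact mul_inv_cancel₀ (by simp; omega)
  · simp [Nat.sub_eq_zero_of_le (not_lt.mp h)]

lemma trn_sum_smul {ι : Type*} (n : ℕ) (s : Finset ι) (c : ι → ℝ)
    (A : ι → Matrix (Fin n) (Fin n) ℝ) :
    trn n (∑ i ∈ s, c i • A i) = ∑ i ∈ s, c i * trn n (A i) := by
  simp [trn, Matrix.mul_sum, Matrix.trace_sum]

lemma trn_sum_smul_shiftΛ_pow_mul (n m : ℕ) (c : Fin n → ℝ) :
    trn n ((∑ k, c k • shiftΛ n ^ (k : ℕ)) * shiftΛ n ^ m)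
      = ∑ k : Fin n, if (k : ℕ) + m < n then c k else 0 := by
  simp only [Finset.sum_mul, smul_mul_assoc, ← pow_add, trn_sum_smul, trn_shiftΛ_pow, mul_ite,
    mul_one, mul_zero]

lemma commute_of_mem_Zn {n : ℕ} {A B : Matrix (Fin n) (Fin n) ℝ} (hA : A ∈ Zn n)
    (hB : B ∈ Zn n) : Commute A B := by
  obtain ⟨a, rfl⟩ := (Submodule.mem_span_range_iff_exists_fun ℝ).mp hA
  obtain ⟨b, rfl⟩ := (Submodule.mem_span_range_iff_exists_fun ℝ).mp hB
  exact .sum_left _ _ _ fun k _ => .sum_right _ _ _ fun l _ =>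
    (((Commute.refl _).pow_pow _ _).smul_left _).smul_right _

lemma exists_trn_mul_ne_zero_of_mem_Zn {n : ℕ} {A : Matrix (Fin n) (Fin n) ℝ} (hA : A ∈ Zn n)
    (hA0 : A ≠ 0) : ∃ B ∈ Zn n, trn n (A * B) ≠ 0 := by
  obtain ⟨c, rfl⟩ := (Submodule.mem_span_range_iff_exists_fun ℝ).mp hA
  obtain ⟨k, hk⟩ : ∃ k, c k ≠ 0 := by
    contrapose! hA0
    simp [hA0]
  obtain ⟨k₀, hk₀, hmin⟩ := wellFounded_lt.has_min {k | c k ≠ 0} ⟨k, hk⟩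
  refine ⟨shiftΛ n ^ (n - 1 - k₀ : ℕ), Submodule.subset_span ⟨⟨n - 1 - k₀, by omega⟩, rfl⟩, ?_⟩
  rw [trn_sum_smul_shiftΛ_pow_mul, Finset.sum_eq_single k₀ _ (by simp), if_pos (by omega)]
  · exact hk₀
  · intro k _ hne
    rcases lt_or_gt_of_ne hne with hlt | hgt
    · rw [not_not.mp (hmin k · hlt), ite_self]
    · rw [if_neg (by omega)]

theorem stmt5_general (n : ℕ) :
    (∀ A ∈ Zn n, ∀ B ∈ Zn n, trn n (A * B) = trn n (B * A))
      ∧ (∀ A ∈ Zn n, A ≠ 0 → ∃ B ∈ Zn n, trn n (A * B) ≠ 0) :=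
  ⟨fun _ hA _ hB => by rw [(commute_of_mem_Zn hA hB).eq],
    fun _ hA => exists_trn_mul_ne_zero_of_mem_Zn hA⟩

/-- for `n ≥ 1`, the restriction of `tr_n` to `Z_n` is a symmetric and
nondegenerate trace form. -/
theorem stmt5 (n : ℕ) (hn : 1 ≤ n) :
    (∀ A ∈ Zn n, ∀ B ∈ Zn n, trn n (A * B) = trn n (B * A))
      ∧ (∀ A ∈ Zn n, A ≠ 0 → ∃ B ∈ Zn n, trn n (A * B) ≠ 0) :=
  stmt5_general n
end
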